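/- Let A be a commutative ring, let a : ℕ → A be a sequence such that a_0 is a unit of A, and let n, k ∈ ℕ with k ≤ n. Let f = Σ_{i≥0} a_i z^i ∈ A⟦z⟧, a unit of A⟦z⟧. Then a_0^{2n+1}·(coefficient of z^k in f^{−(n+1)}) = Σ_α μ(−(n+1); α)·a_0^{n−|α|}·∏_{i≥1} a_i^{α_i}, where the sum runs over finitely supported α : {1,2,3,…} → ℕ with |α|′ = k (note that such α automatically satisfy |α| ≤ |α|′ = k ≤ n, so the exponent n−|α| is a natural number, and the sum is finite). -/

import Mathlib

noncomputable section

/-- The modified multinomial coefficient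
`μ(-(n+1); α) = (-1)^{|α|} (n+|α|)! / (n! ∏ αᵢ!)`, the coefficient of
`b₁^{α₁}b₂^{α₂}⋯` in the formal expansion of `(1 + b₁ + b₂ + ⋯)^{-(n+1)}`. -/
def muCoef (n : ℕ) (α : ℕ+ →₀ ℕ) : ℤ :=
  (-1) ^ (α.sum fun _ m => m) *
    (((n + α.sum fun _ m => m).factorial /
      (n.factorial * α.prod fun _ m => m.factorial) : ℕ) : ℤ)

/-! Write `f = a₀ (1 - h)` with `h = 1 - a₀⁻¹ f`, a power series without constant term, so that
`f^{-(n+1)} = a₀^{-(n+1)} ∑_j C(n+j, n) h^j` is the substitution of `h` into `(1 - X)^{-(n+1)}`.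
By the multinomial theorem the coefficient of `z^k` in `h^j` is a sum over the partitions of `k`
into `j` parts, the partition with multiplicity vector `α` contributing
`multinomial α · ∏ hᵢ^{αᵢ}` with `hᵢ = -aᵢ/a₀`. Since
`μ(-(n+1); α) = (-1)^{|α|} C(n+|α|, n) multinomial α`, it remains to collect the powers of `a₀`
into `a₀^{n-|α|}`, which is legitimate because `|α| ≤ k ≤ n`. -/

open Finset PowerSeries

theorem Finset.sum_pow_eq_sum_finsuppAntidiag {ι R : Type*} [DecidableEq ι] [CommSemiring R]
    (s : Finset ι) (f : ι → R) (d : ℕ) :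
    (∑ i ∈ s, f i) ^ d =
      ∑ α ∈ finsuppAntidiag s d, α.multinomial * α.prod fun i m => f i ^ m := by
  rw [sum_pow_eq_sum_piAntidiag]
  refine (sum_nbij (⇑) (fun α hα => ?_) (fun α _ β _ h => DFunLike.coe_injective h)
    (fun κ hκ => ?_) (fun α hα => ?_)).symm
  · simpa [subset_iff] using hα
  · rw [mem_coe, mem_piAntidiag] at hκ
    exact ⟨Finsupp.onFinset s κ hκ.2, by simpa [subset_iff] using hκ, rfl⟩
  · have hs := (mem_finsuppAntidiag.1 hα).2
    rw [Finsupp.multinomial_eq_of_support_subset hs,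
      Finsupp.prod_of_support_subset _ hs _ fun _ _ => pow_zero _]

theorem Finsupp.degree_le_weight {σ : Type*} {w : σ → ℕ} (hw : ∀ i, w i ≠ 0) (α : σ →₀ ℕ) :
    α.degree ≤ weight w α := by
  rw [Finsupp.degree_apply, Finsupp.weight_apply, Finsupp.sum]
  exact Finset.sum_le_sum fun i _ => Nat.le_mul_of_pos_right _ (Nat.pos_of_ne_zero (hw i))

theorem PNat.mem_Iio_succPNat {i : ℕ+} {k : ℕ} : i ∈ Iio k.succPNat ↔ (i : ℕ) ≤ k := by
  simp [← PNat.coe_lt_coe]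

theorem pow_mul_pow_eq_pow_sub {M : Type*} [CommMonoid M] {a b : M} (h : a * b = 1) {m n : ℕ}
    (hnm : n ≤ m) : a ^ m * b ^ n = a ^ (m - n) := by
  rw [← pow_sub_mul_pow a hnm, mul_assoc, ← mul_pow, h, one_pow, mul_one]

open Nat in
theorem muCoef_eq (n : ℕ) (α : ℕ+ →₀ ℕ) :
    muCoef n α = (-1) ^ α.degree * ((n + α.degree).choose n * α.multinomial : ℕ) := by
  have hmult : (α.prod fun _ m => m !) * α.multinomial = α.degree ! :=
    Nat.multinomial_spec _ _
  have hfact : (n + α.degree)! =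
      (n ! * α.prod fun _ m => m !) * ((n + α.degree).choose n * α.multinomial) := by
    rw [← Nat.add_choose_mul_factorial_mul_factorial, ← Nat.choose_symm_add, ← hmult]
    ring
  have hpos : 0 < n ! * α.prod fun _ m => m ! :=
    Nat.mul_pos (factorial_pos n) (Finset.prod_pos fun _ _ => factorial_pos _)
  have hdeg : (α.sum fun _ m => m) = α.degree := rfl
  rw [muCoef, hdeg, hfact, Nat.mul_div_cancel_left _ hpos]

section PartitionMultiplicities

open Finsupp

/-- The multiplicity vectors `α` of the partitions of `k`: `α i` parts are equal to `i`. -/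
def partitionMultiplicities (k : ℕ) : Finset (ℕ+ →₀ ℕ) :=
  ((Iio k.succPNat).finsupp fun _ => range (k + 1)).filter (weight PNat.val · = k)

theorem support_subset_Iio_weight (α : ℕ+ →₀ ℕ) :
    α.support ⊆ Iio (weight PNat.val α).succPNat := fun _ hi =>
  PNat.mem_Iio_succPNat.2 (le_weight_of_ne_zero' _ (mem_support_iff.1 hi))

theorem mem_partitionMultiplicities {k : ℕ} {α : ℕ+ →₀ ℕ} :
    α ∈ partitionMultiplicities k ↔ weight PNat.val α = k := by
  refine ⟨fun h => (mem_filter.1 h).2, fun h => mem_filter.2 ⟨?_, h⟩⟩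
  refine mem_finsupp_iff.2 ⟨h ▸ support_subset_Iio_weight α, fun i _ => ?_⟩
  exact mem_range.2 (Nat.lt_succ_of_le (h ▸ le_weight _ i.ne_zero α))

theorem degree_le_of_mem_partitionMultiplicities {k : ℕ} {α : ℕ+ →₀ ℕ}
    (hα : α ∈ partitionMultiplicities k) : α.degree ≤ k :=
  mem_partitionMultiplicities.1 hα ▸ degree_le_weight (fun i => i.ne_zero) α

theorem finsum_ite_eq_sum_partitionMultiplicities {M : Type*} [AddCommMonoid M] (k : ℕ)
    (F : (ℕ+ →₀ ℕ) → M) :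
    ∑ᶠ α : ℕ+ →₀ ℕ, (if (α.sum fun i m => (i : ℕ) * m) = k then F α else 0) =
      ∑ α ∈ partitionMultiplicities k, F α := by
  have hweight (α : ℕ+ →₀ ℕ) : (α.sum fun i m => (i : ℕ) * m) = weight PNat.val α := by
    simp [weight_apply, mul_comm]
  simp only [hweight]
  rw [finsum_eq_sum_of_support_subset _ fun α hα => ?_, ← sum_filter]
  · exact sum_congr (filter_true_of_mem fun α => mem_partitionMultiplicities.1) fun _ _ => rfl
  · exact mem_partitionMultiplicities.2 (of_not_not fun h => hα (if_neg h))

end PartitionMultiplicities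

namespace PowerSeries

section CommSemiring

variable {R : Type*} [CommSemiring R]

theorem sum_monomial_pow {ι : Type*} [DecidableEq ι] (s : Finset ι) (w : ι → ℕ) (c : ι → R)
    (d : ℕ) :
    (∑ i ∈ s, monomial (w i) (c i)) ^ d =
      ∑ α ∈ finsuppAntidiag s d,
        monomial (Finsupp.weight w α) (α.multinomial * α.prod fun i m => c i ^ m) := by
  rw [sum_pow_eq_sum_finsuppAntidiag]
  refine sum_congr rfl fun α _ => ?_
  simp only [Finsupp.prod, Finsupp.weight_apply, Finsupp.sum, monomial_pow, prod_monomial,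
    smul_eq_mul]
  rw [← map_natCast C, ← smul_eq_C_mul, ← map_smul, smul_eq_mul]

theorem coeff_pow_eq_of_trunc_eq {f g : R⟦X⟧} {k : ℕ} (h : trunc (k + 1) f = trunc (k + 1) g)
    (d : ℕ) : coeff k (f ^ d) = coeff k (g ^ d) := by
  have hk (p : R⟦X⟧) : coeff k p = (trunc (k + 1) p).coeff k := by
    rw [coeff_trunc, if_pos k.lt_succ_self]
  rw [hk, hk (g ^ d), ← trunc_trunc_pow, h, trunc_trunc_pow]

theorem trunc_eq_trunc_sum_monomial_pnat {g : R⟦X⟧} (hg : constantCoeff g = 0) (k : ℕ) :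
    trunc (k + 1) g =
      trunc (k + 1) (∑ i ∈ Iio k.succPNat, monomial (i : ℕ) (coeff (i : ℕ) g)) := by
  ext m
  rw [coeff_trunc, coeff_trunc]
  split_ifs with hm
  · simp only [map_sum, coeff_monomial]
    rcases m with _ | m
    · rw [coeff_zero_eq_constantCoeff_apply, hg]
      exact (sum_eq_zero fun i _ => if_neg i.ne_zero.symm).symm
    · rw [sum_eq_single_of_mem m.succPNat (PNat.mem_Iio_succPNat.2 (by simpa using hm)),
        Nat.succPNat_coe, if_pos rfl]
      exact fun i _ hi => if_neg fun h => hi (PNat.coe_injective h.symm)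
  · rfl

theorem coeff_pow_eq_sum_partitionMultiplicities {g : R⟦X⟧} (hg : constantCoeff g = 0)
    (k d : ℕ) :
    coeff k (g ^ d) = ∑ α ∈ partitionMultiplicities k with α.degree = d,
      α.multinomial * α.prod fun i m => coeff (i : ℕ) g ^ m := by
  rw [coeff_pow_eq_of_trunc_eq (trunc_eq_trunc_sum_monomial_pnat hg k), sum_monomial_pow,
    map_sum]
  simp only [coeff_monomial]
  rw [← sum_filter]
  refine sum_congr (Finset.ext fun α => ?_) fun _ _ => rfl
  simp only [mem_filter, mem_finsuppAntidiag', mem_partitionMultiplicities]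
  constructor
  · rintro ⟨⟨hd, -⟩, hw⟩
    exact ⟨hw.symm, hd⟩
  · rintro ⟨hw, hd⟩
    exact ⟨⟨hd, hw ▸ support_subset_Iio_weight α⟩, hw.symm⟩

end CommSemiring

variable {A : Type*} [CommRing A]

theorem coeff_subst_eq_sum_partitionMultiplicities (c : A⟦X⟧) {g : A⟦X⟧}
    (hg : constantCoeff g = 0) (k : ℕ) :
    coeff k (c.subst g) = ∑ α ∈ partitionMultiplicities k,
      coeff α.degree c * α.multinomial * α.prod fun i m => coeff (i : ℕ) g ^ m := by
  have hsupp : Function.support (fun d => coeff d c • coeff k (g ^ d)) ⊆ range (k + 1) := by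
    refine Function.support_subset_iff'.2 fun d hdk => ?_
    rw [coeff_pow_eq_sum_partitionMultiplicities hg, filter_false_of_mem, sum_empty, smul_zero]
    intro α hα hdeg
    have := degree_le_of_mem_partitionMultiplicities hα
    simp only [mem_coe, mem_range] at hdk
    omega
  rw [coeff_subst' (HasSubst.of_constantCoeff_zero' hg), finsum_eq_sum_of_support_subset _ hsupp,
    ← sum_fiberwise_of_maps_to (g := Finsupp.degree) (t := range (k + 1))
      fun α hα => mem_range.2 (Nat.lt_succ_of_le (degree_le_of_mem_partitionMultiplicities hα))]
  refine sum_congr rfl fun d _ => ?_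
  rw [coeff_pow_eq_sum_partitionMultiplicities hg, smul_eq_mul, mul_sum]
  refine sum_congr rfl fun α hα => ?_
  rw [(mem_filter.1 hα).2, mul_assoc]

theorem invOfUnit_pow_eq_subst {f : A⟦X⟧} {u : Aˣ} (hf : constantCoeff f = u) (n : ℕ) :
    f.invOfUnit u ^ (n + 1) =
      C ((↑u⁻¹ : A) ^ (n + 1)) *
        (mk fun j => ((n + j).choose n : A)).subst (1 - C (↑u⁻¹ : A) * f) := by
  set h := 1 - C (↑u⁻¹ : A) * f
  have hh : HasSubst h := HasSubst.of_constantCoeff_zero' (by simp [h, hf])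
  have hsubst : (1 - h) ^ (n + 1) * (mk fun j => ((n + j).choose n : A)).subst h = 1 := by
    have := congrArg (substAlgHom (R := A) hh) (mk_add_choose_mul_one_sub_pow_eq_one A n)
    rwa [map_mul, map_pow, map_sub, map_one, substAlgHom_X, coe_substAlgHom,
      mul_comm] at this
  have hinv : f ^ (n + 1) * f.invOfUnit u ^ (n + 1) = 1 := by
    rw [← mul_pow, mul_invOfUnit f u hf, one_pow]
  refine (IsUnit.of_mul_eq_one _ hinv).mul_left_cancel (hinv.trans ?_)
  rw [← hsubst, sub_sub_cancel, map_pow, mul_pow]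
  ring

end PowerSeries

/-- For a commutative ring `A`, a sequence `a : ℕ → A` with `a 0` a unit, and `k ≤ n`:
`a₀^{2n+1} · (coeff of z^k in f^{-(n+1)}) = ∑_{|α|' = k} μ(-(n+1); α) a₀^{n-|α|} ∏_{i≥1} aᵢ^{αᵢ}`,
where `f = ∑ aᵢ zⁱ` and the sum runs over finitely supported `α : {1,2,…} → ℕ`
with `|α|' = k`. -/
theorem coeff_inv_pow_eq_mu_sum {A : Type*} [CommRing A] (a : ℕ → A) (ha : IsUnit (a 0))
    (n k : ℕ) (hk : k ≤ n) :
    a 0 ^ (2 * n + 1) *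
        PowerSeries.coeff k ((PowerSeries.mk a).invOfUnit ha.unit ^ (n + 1))
    = ∑ᶠ α : ℕ+ →₀ ℕ,
        if (α.sum fun i m => (i : ℕ) * m) = k then
          (muCoef n α : A) * a 0 ^ (n - α.sum fun _ m => m) *
            (α.prod fun i m => a (i : ℕ) ^ m)
        else 0 := by
  rw [invOfUnit_pow_eq_subst (by simp), coeff_C_mul,
    coeff_subst_eq_sum_partitionMultiplicities _ (by simp),
    finsum_ite_eq_sum_partitionMultiplicities, mul_sum, mul_sum]
  set v : A := ↑ha.unit⁻¹
  have hav : a 0 * v = 1 := ha.mul_val_inv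
  have hcoeff (i : ℕ+) : coeff (i : ℕ) (1 - C v * mk a) = -v * a i := by
    simp [coeff_one, i.ne_zero]
  refine sum_congr rfl fun α hα => ?_
  have hj : α.degree ≤ n := (degree_le_of_mem_partitionMultiplicities hα).trans hk
  have hpow : a 0 ^ (2 * n + 1) * v ^ (n + 1) * v ^ α.degree = a 0 ^ (n - α.degree) := by
    rw [pow_mul_pow_eq_pow_sub hav (by omega), show 2 * n + 1 - (n + 1) = n by omega,
      pow_mul_pow_eq_pow_sub hav hj]
  have hprod : (α.prod fun i m => (-v * a i) ^ m) =
      (-v) ^ α.degree * α.prod fun i m => a i ^ m := by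
    simp only [mul_pow, Finsupp.prod_mul]
    rw [Finsupp.prod, prod_pow_eq_pow_sum]
    rfl
  have hdeg : (α.sum fun _ m => m) = α.degree := rfl
  simp only [hcoeff, coeff_mk]
  rw [hprod, hdeg, muCoef_eq, ← hpow, neg_pow v]
  push_cast
  ring

end
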